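/- arXiv:2401.12081 — 2 statements merged into one kernel-verified Lean document; each statement's English description precedes it below -/
import Mathlib

section
/- Let n ≥ 1 and let r₁, …, rₙ be positive real numbers with r₁·r₂⋯rₙ < 1. For each i ∈ {1,…,n} let gᵢ : ℝ → ℝ be a function such that gᵢ(x) → 0 as x → 0⁺ and such that for every ε > 0 there exist c > 0 and δ > 0 with gᵢ(x) ≥ c·x^(rᵢ + ε) for all x ∈ (0, δ). Then there exists δ' > 0 such that the composition π = gₙ ∘ ⋯ ∘ g₁ satisfies π(x) > x for all x ∈ (0, δ'). -/
/-!
Each transition map is bounded below near `0⁺` by `c x ^ (rᵢ + ε)`. Such power lower bounds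
compose, with the exponents multiplying, as long as the inner map tends to `0⁺`; so the return
map is bounded below by `c x ^ p` with `p = ∏ (rᵢ + ε)`, and `p < 1` once `ε` is small. Then
`c x ^ p > x` for small `x > 0`, because `x ^ (1 - p) → 0`.
-/

open Filter Topology Set Real

def HasPowerLowerBound (f : ℝ → ℝ) (s : ℝ) : Prop :=
  ∃ c > 0, ∀ᶠ x in 𝓝[>] 0, c * x ^ s ≤ f x

namespace HasPowerLowerBound

variable {f g : ℝ → ℝ} {s t : ℝ}

lemma eventually_pos (hf : HasPowerLowerBound f s) : ∀ᶠ x in 𝓝[>] 0, 0 < f x := by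
  obtain ⟨c, hc, hbound⟩ := hf
  filter_upwards [self_mem_nhdsWithin, hbound] with x (hx : 0 < x) hfx
  exact lt_of_lt_of_le (by positivity) hfx

lemma tendsto_nhdsGT (hf : HasPowerLowerBound f s) (hf0 : Tendsto f (𝓝[>] 0) (𝓝 0)) :
    Tendsto f (𝓝[>] 0) (𝓝[>] 0) :=
  tendsto_nhdsWithin_iff.2 ⟨hf0, hf.eventually_pos⟩

lemma comp (hg : HasPowerLowerBound g t) (ht : 0 ≤ t) (hf : HasPowerLowerBound f s)
    (hf0 : Tendsto f (𝓝[>] 0) (𝓝 0)) : HasPowerLowerBound (g ∘ f) (s * t) := by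
  obtain ⟨c₁, hc₁, hfbound⟩ := hf
  obtain ⟨c₂, hc₂, hgbound⟩ := hg
  refine ⟨c₂ * c₁ ^ t, by positivity, ?_⟩
  filter_upwards [self_mem_nhdsWithin, hfbound,
    (tendsto_nhdsGT ⟨c₁, hc₁, hfbound⟩ hf0).eventually hgbound] with x (hx : 0 < x) hfx hgfx
  calc c₂ * c₁ ^ t * x ^ (s * t) = c₂ * (c₁ * x ^ s) ^ t := by
        rw [mul_rpow hc₁.le (by positivity), rpow_mul hx.le]; ring
    _ ≤ c₂ * f x ^ t := by gcongr
    _ ≤ g (f x) := hgfx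

lemma eventually_lt_self (hf : HasPowerLowerBound f s) (hs : s < 1) :
    ∀ᶠ x in 𝓝[>] 0, x < f x := by
  obtain ⟨c, hc, hbound⟩ := hf
  have hsmall : Tendsto (fun x : ℝ => x ^ (1 - s)) (𝓝[>] 0) (𝓝 0) := by
    have h := (continuousAt_rpow_const 0 (1 - s) (Or.inr (sub_pos.2 hs).le)).tendsto
    rw [zero_rpow (sub_pos.2 hs).ne'] at h
    exact h.mono_left nhdsWithin_le_nhds
  filter_upwards [self_mem_nhdsWithin, hbound, hsmall.eventually (gt_mem_nhds hc)]
    with x (hx : 0 < x) hfx hxc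
  calc x = x ^ (1 - s) * x ^ s := by rw [← rpow_add hx, sub_add_cancel, rpow_one]
    _ < c * x ^ s := by gcongr
    _ ≤ f x := hfx

end HasPowerLowerBound

lemma hasPowerLowerBound_foldl {ι : Type*} (g : ι → ℝ → ℝ) (s : ι → ℝ) (hs : ∀ i, 0 ≤ s i)
    (hg0 : ∀ i, Tendsto (g i) (𝓝[>] 0) (𝓝 0)) (hg : ∀ i, HasPowerLowerBound (g i) (s i))
    (l : List ι) :
    HasPowerLowerBound (fun x => l.foldl (fun y i => g i y) x) (l.map s).prod := by
  induction l with
  | nil => exact ⟨1, one_pos, by simp⟩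
  | cons i t ih =>
    have ht : 0 ≤ (t.map s).prod := List.prod_nonneg (by simpa using fun j _ => hs j)
    simpa only [List.foldl_cons, List.map_cons, List.prod_cons, Function.comp_def]
      using ih.comp ht (hg i) (hg0 i)

lemma exists_pos_prod_add_lt {ι : Type*} [Fintype ι] (r : ι → ℝ) {b : ℝ} (h : ∏ i, r i < b) :
    ∃ ε > 0, ∏ i, (r i + ε) < b := by
  have hcont : Continuous fun ε : ℝ => ∏ i, (r i + ε) := by fun_prop
  have hnear : ∀ᶠ ε in 𝓝 (0 : ℝ), ∏ i, (r i + ε) < b :=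
    hcont.continuousAt.eventually_lt continuousAt_const (by simpa using h)
  obtain ⟨ε, hεb, hε⟩ := ((hnear.filter_mono nhdsWithin_le_nhds).and
    (self_mem_nhdsWithin : Ioi (0 : ℝ) ∈ 𝓝[>] 0)).exists
  exact ⟨ε, hε, hεb⟩

theorem stmt_1_general (n : ℕ) (r : Fin n → ℝ)
    (hr : ∀ i, 0 < r i) (hprod : ∏ i, r i < 1)
    (g : Fin n → ℝ → ℝ)
    (hg0 : ∀ i, Filter.Tendsto (g i) (nhdsWithin 0 (Set.Ioi 0)) (nhds 0))
    (hg : ∀ i, ∀ ε : ℝ, 0 < ε →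
      ∃ c > (0:ℝ), ∃ δ > (0:ℝ), ∀ x : ℝ, 0 < x → x < δ →
        c * x ^ (r i + ε) ≤ g i x) :
    ∃ δ' > (0:ℝ), ∀ x : ℝ, 0 < x → x < δ' →
      x < (List.finRange n).foldl (fun y i => g i y) x := by
  obtain ⟨ε, hε, hεprod⟩ := exists_pos_prod_add_lt r hprod
  have hbound (i : Fin n) : HasPowerLowerBound (g i) (r i + ε) := by
    obtain ⟨c, hc, δ, hδ, hb⟩ := hg i ε hε
    exact ⟨c, hc, (nhdsGT_basis 0).eventually_iff.2 ⟨δ, hδ, fun x hx => hb x hx.1 hx.2⟩⟩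
  have hπ := hasPowerLowerBound_foldl g (fun i => r i + ε) (fun i => by linarith [hr i])
    hg0 hbound (List.finRange n)
  rw [← Fin.prod_univ_def] at hπ
  obtain ⟨δ, hδ, hlt⟩ := (nhdsGT_basis 0).eventually_iff.1 (hπ.eventually_lt_self hεprod)
  exact ⟨δ, hδ, fun x hx hxδ => hlt ⟨hx, hxδ⟩⟩

/-- Let `n ≥ 1` and `r₁, …, rₙ` be positive reals with product `< 1`.
If each `gᵢ : ℝ → ℝ` tends to `0` as `x → 0⁺` and satisfies, for every `ε > 0`,
a lower bound `gᵢ x ≥ c * x ^ (rᵢ + ε)` near `0⁺`, then the composition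
`π = gₙ ∘ ⋯ ∘ g₁` satisfies `π x > x` for all small `x > 0`. -/
theorem stmt_1 (n : ℕ) (hn : 1 ≤ n) (r : Fin n → ℝ)
    (hr : ∀ i, 0 < r i) (hprod : ∏ i, r i < 1)
    (g : Fin n → ℝ → ℝ)
    (hg0 : ∀ i, Filter.Tendsto (g i) (nhdsWithin 0 (Set.Ioi 0)) (nhds 0))
    (hg : ∀ i, ∀ ε : ℝ, 0 < ε →
      ∃ c > (0:ℝ), ∃ δ > (0:ℝ), ∀ x : ℝ, 0 < x → x < δ →
        c * x ^ (r i + ε) ≤ g i x) :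
    ∃ δ' > (0:ℝ), ∀ x : ℝ, 0 < x → x < δ' →
      x < (List.finRange n).foldl (fun y i => g i y) x :=
  stmt_1_general n r hr hprod g hg0 hg
end

section
/- Let X : ℝ² → ℝ² be a C^∞ vector field on a neighborhood of the closed box [0, x₁] × [0, y₁] (x₁, y₁ > 0) such that X(0,0) = (0,0), the second component of X vanishes at every point (x, 0) of the box, the first component of X vanishes at every point (0, y) of the box, and the total derivative of X at the origin is the diagonal linear map diag(λ, ν) with ν < 0 < λ. Then for every ε ∈ (0, λ) there exists δ ∈ (0, min(x₁, y₁)) with the following property: for every x ∈ (0, δ), every T > 0, every y ∈ (0, δ) and every differentiable curve γ : [0, T] → ℝ² satisfying γ'(t) = X(γ(t)) for all t ∈ [0, T], γ(0) = (x, δ), γ(T) = (δ, y), and γ(t) ∈ (0, δ) × (0, δ) for all t ∈ (0, T), one has δ^(1 − |ν|/(λ − ε)) · x^(|ν|/(λ − ε)) < y < δ^(1 − |ν|/(λ + ε)) · x^(|ν|/(λ + ε)). -/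
private lemma hderiv_fst {γ : ℝ → ℝ × ℝ} {v : ℝ × ℝ} {s : Set ℝ} {t : ℝ}
    (h : HasDerivWithinAt γ v s t) : HasDerivWithinAt (fun u => (γ u).1) v.1 s t := by
  simpa using h.hasFDerivWithinAt.fst.hasDerivWithinAt

private lemma hderiv_snd {γ : ℝ → ℝ × ℝ} {v : ℝ × ℝ} {s : Set ℝ} {t : ℝ}
    (h : HasDerivWithinAt γ v s t) : HasDerivWithinAt (fun u => (γ u).2) v.2 s t := by
  simpa using h.hasFDerivWithinAt.snd.hasDerivWithinAt

set_option maxHeartbeats 1000000 in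
/-- Dulac map estimate near a hyperbolic saddle. Let `X` be a `C^∞`
vector field on a neighborhood of the box `[0, x₁] × [0, y₁]` vanishing at the
origin, with the `x`-axis and the `y`-axis invariant (second component zero on the
bottom edge, first component zero on the left edge), and whose derivative at the
origin is `diag(λ, ν)` with `ν < 0 < λ`. Then for every `ε ∈ (0, λ)` there is
`δ ∈ (0, min x₁ y₁)` such that any trajectory of `X` crossing the square
`(0, δ) × (0, δ)` from the point `(x, δ)` of the top side to the point `(δ, y)` of
the right side satisfies the two-sided power estimates
`δ^(1 − |ν|/(λ−ε)) x^(|ν|/(λ−ε)) < y < δ^(1 − |ν|/(λ+ε)) x^(|ν|/(λ+ε))`. -/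
theorem stmt_10 (x₁ y₁ lam ν : ℝ) (hx₁ : 0 < x₁) (hy₁ : 0 < y₁)
    (hν : ν < 0) (hlam : 0 < lam)
    (X : ℝ × ℝ → ℝ × ℝ) (U : Set (ℝ × ℝ)) (hU : IsOpen U)
    (hbox : Set.Icc (0, 0) (x₁, y₁) ⊆ U)
    (hX : ContDiffOn ℝ (⊤ : ℕ∞) X U)
    (hX0 : X (0, 0) = (0, 0))
    (hbottom : ∀ x ∈ Set.Icc (0:ℝ) x₁, (X (x, 0)).2 = 0)
    (hleft : ∀ y ∈ Set.Icc (0:ℝ) y₁, (X (0, y)).1 = 0)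
    (hdiag : ∀ u v : ℝ, fderiv ℝ X (0, 0) (u, v) = (lam * u, ν * v)) :
    ∀ ε : ℝ, 0 < ε → ε < lam →
      ∃ δ : ℝ, 0 < δ ∧ δ < min x₁ y₁ ∧
        ∀ x : ℝ, 0 < x → x < δ → ∀ T : ℝ, 0 < T → ∀ y : ℝ, 0 < y → y < δ →
          ∀ γ : ℝ → ℝ × ℝ,
            (∀ t ∈ Set.Icc 0 T, HasDerivWithinAt γ (X (γ t)) (Set.Icc 0 T) t) →
            γ 0 = (x, δ) → γ T = (δ, y) →
            (∀ t ∈ Set.Ioo 0 T, γ t ∈ Set.Ioo (0:ℝ) δ ×ˢ Set.Ioo (0:ℝ) δ) →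
            δ ^ (1 - |ν| / (lam - ε)) * x ^ (|ν| / (lam - ε)) < y ∧
            y < δ ^ (1 - |ν| / (lam + ε)) * x ^ (|ν| / (lam + ε)) := by
  intro ε hε hεlam
  have hνabs : |ν| = -ν := abs_of_neg hν
  have hνpos : 0 < |ν| := abs_pos.mpr (ne_of_lt hν)
  set L : (ℝ × ℝ) →L[ℝ] (ℝ × ℝ) := fderiv ℝ X (0, 0) with hL
  have hApos : 0 < |ν| + lam + ε := by positivity
  set ε₁ : ℝ := |ν| * ε / (2 * (|ν| + lam + ε)) with hε₁def
  have hε₁pos : 0 < ε₁ := by positivity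
  have hε₁eq : ε₁ * (2 * (|ν| + lam + ε)) = |ν| * ε := by
    rw [hε₁def]; exact div_mul_cancel₀ _ (by linarith : (0:ℝ) < 2 * (|ν| + lam + ε)).ne'
  have h0U : ((0 : ℝ), (0 : ℝ)) ∈ U := hbox ⟨by simp [Prod.le_def], by
    simp [Prod.le_def, le_of_lt hx₁, le_of_lt hy₁]⟩
  -- continuity of the derivative at the origin
  have hcont : ContinuousOn (fderiv ℝ X) U :=
    hX.continuousOn_fderiv_of_isOpen hU (by simp)
  have hcontAt : ContinuousAt (fderiv ℝ X) (0, 0) :=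
    hcont.continuousAt (hU.mem_nhds h0U)
  obtain ⟨r, hr, hrball⟩ := Metric.continuousAt_iff.mp hcontAt ε₁ hε₁pos
  -- choice of δ
  set δ : ℝ := min (r / 2) (min x₁ y₁ / 2) with hδdef
  have hminpos : 0 < min x₁ y₁ := lt_min hx₁ hy₁
  have hδpos : 0 < δ := lt_min (by positivity) (by positivity)
  have hδlt : δ < min x₁ y₁ := lt_of_le_of_lt (min_le_right _ _) (by linarith)
  have hδx₁ : δ ≤ x₁ := le_of_lt (lt_of_lt_of_le hδlt (min_le_left _ _))
  have hδy₁ : δ ≤ y₁ := le_of_lt (lt_of_lt_of_le hδlt (min_le_right _ _))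
  have hδr : δ < r := lt_of_le_of_lt (min_le_left _ _) (by linarith)
  -- the square
  set S : Set (ℝ × ℝ) := Set.Icc (0, 0) (δ, δ) with hSdef
  have hSsub : S ⊆ U := by
    intro p hp
    apply hbox
    obtain ⟨h1, h2⟩ := hp
    exact ⟨h1, ⟨le_trans h2.1 hδx₁, le_trans h2.2 hδy₁⟩⟩
  have hScoord : ∀ p : ℝ × ℝ, p ∈ S → 0 ≤ p.1 ∧ p.1 ≤ δ ∧ 0 ≤ p.2 ∧ p.2 ≤ δ :=
    fun p hp => ⟨hp.1.1, hp.2.1, hp.1.2, hp.2.2⟩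
  have hSnorm : ∀ p ∈ S, ‖p‖ ≤ δ := by
    intro p hp
    obtain ⟨c1, c2, c3, c4⟩ := hScoord p hp
    rw [Prod.norm_def]
    have e1 : |p.1| ≤ δ := abs_le.mpr ⟨by linarith, c2⟩
    have e2 : |p.2| ≤ δ := abs_le.mpr ⟨by linarith, c4⟩
    exact max_le e1 e2
  -- derivative bound on the square
  have hfd : ∀ p ∈ S, ‖fderiv ℝ X p - L‖ ≤ ε₁ := by
    intro p hp
    have : dist p (0, 0) < r := by
      rw [dist_eq_norm]
      rw [show ((0:ℝ), (0:ℝ)) = (0 : ℝ × ℝ) from rfl, sub_zero]; exact lt_of_le_of_lt (hSnorm p hp) hδr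
    exact le_of_lt (by simpa [dist_eq_norm] using hrball this)
  -- mean value estimate for g = X - L
  have hg : ∀ p ∈ S, ∀ q ∈ S,
      ‖(X p - L p) - (X q - L q)‖ ≤ ε₁ * ‖p - q‖ := by
    intro p hp q hq
    have hconv : Convex ℝ S := convex_Icc _ _
    refine hconv.norm_image_sub_le_of_norm_hasFDerivWithin_le
      (f := fun p => X p - L p) (f' := fun q => fderiv ℝ X q - L) ?_ ?_ hq hp
    · intro z hz
      have hdz : HasFDerivAt X (fderiv ℝ X z) z :=
        (hX.differentiableOn (by simp) z (hSsub hz)).differentiableAt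
          (hU.mem_nhds (hSsub hz)) |>.hasFDerivAt
      exact (hdz.sub L.hasFDerivAt).hasFDerivWithinAt
    · intro z hz
      exact hfd z hz
  have hLval : ∀ p : ℝ × ℝ, L p = (lam * p.1, ν * p.2) := by
    intro p
    have := hdiag p.1 p.2
    simpa using this
  -- pointwise estimates
  have key1 : ∀ p : ℝ × ℝ, p ∈ S → |(X p).1 - lam * p.1| ≤ ε₁ * p.1 := by
    intro p hp
    have hq : ((0 : ℝ), p.2) ∈ S := ⟨⟨le_refl _, hp.1.2⟩, ⟨le_of_lt hδpos, hp.2.2⟩⟩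
    have h := hg p hp ((0 : ℝ), p.2) hq
    have hx0 : (X ((0 : ℝ), p.2)).1 = 0 := hleft p.2 ⟨hp.1.2, le_trans hp.2.2 hδy₁⟩
    have hnorm : ‖p - ((0 : ℝ), p.2)‖ = |p.1| := by
      rw [Prod.norm_def]
      simp
    rw [hnorm] at h
    have hfst : ‖((X p - L p) - (X ((0:ℝ), p.2) - L ((0:ℝ), p.2))).1‖
        ≤ ‖(X p - L p) - (X ((0:ℝ), p.2) - L ((0:ℝ), p.2))‖ := norm_fst_le _
    have hcomp : ((X p - L p) - (X ((0:ℝ), p.2) - L ((0:ℝ), p.2))).1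
        = (X p).1 - lam * p.1 := by
      simp [hLval, hx0]
    rw [hcomp, Real.norm_eq_abs] at hfst
    have hp1 : |p.1| = p.1 := abs_of_nonneg hp.1.1
    calc |(X p).1 - lam * p.1| ≤ ε₁ * |p.1| := le_trans hfst h
      _ = ε₁ * p.1 := by rw [hp1]
  have key2 : ∀ p : ℝ × ℝ, p ∈ S → |(X p).2 - ν * p.2| ≤ ε₁ * p.2 := by
    intro p hp
    have hq : (p.1, (0 : ℝ)) ∈ S := ⟨⟨hp.1.1, le_refl _⟩, ⟨hp.2.1, le_of_lt hδpos⟩⟩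
    have h := hg p hp (p.1, (0 : ℝ)) hq
    have hy0 : (X (p.1, (0 : ℝ))).2 = 0 := hbottom p.1 ⟨hp.1.1, le_trans hp.2.1 hδx₁⟩
    have hnorm : ‖p - (p.1, (0 : ℝ))‖ = |p.2| := by
      rw [Prod.norm_def]
      simp
    rw [hnorm] at h
    have hsnd : ‖((X p - L p) - (X (p.1, (0:ℝ)) - L (p.1, (0:ℝ)))).2‖
        ≤ ‖(X p - L p) - (X (p.1, (0:ℝ)) - L (p.1, (0:ℝ)))‖ := norm_snd_le _
    have hcomp : ((X p - L p) - (X (p.1, (0:ℝ)) - L (p.1, (0:ℝ)))).2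
        = (X p).2 - ν * p.2 := by
      simp [hLval, hy0]
    rw [hcomp, Real.norm_eq_abs] at hsnd
    have hp2 : |p.2| = p.2 := abs_of_nonneg hp.1.2
    calc |(X p).2 - ν * p.2| ≤ ε₁ * |p.2| := le_trans hsnd h
      _ = ε₁ * p.2 := by rw [hp2]
  refine ⟨δ, hδpos, hδlt, ?_⟩
  intro x hx hxδ T hT y hy hyδ γ hγ hγ0 hγT hγin
  -- membership of the trajectory in the square with positive coordinates
  have hmem : ∀ t ∈ Set.Icc (0 : ℝ) T, 0 < (γ t).1 ∧ (γ t).1 ≤ δ ∧ 0 < (γ t).2 ∧ (γ t).2 ≤ δ := by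
    intro t ht
    rcases eq_or_lt_of_le ht.1 with h0 | h0
    · rw [← h0, hγ0]
      exact ⟨hx, le_of_lt hxδ, hδpos, le_refl _⟩
    rcases eq_or_lt_of_le ht.2 with hTt | hTt
    · rw [hTt, hγT]
      exact ⟨hδpos, le_refl _, hy, le_of_lt hyδ⟩
    have := hγin t ⟨h0, hTt⟩
    obtain ⟨h1, h2⟩ := this
    exact ⟨h1.1, le_of_lt h1.2, h2.1, le_of_lt h2.2⟩
  have hmemS : ∀ t ∈ Set.Icc (0 : ℝ) T, γ t ∈ S := by
    intro t ht
    obtain ⟨a, b, c, d⟩ := hmem t ht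
    exact ⟨⟨le_of_lt a, le_of_lt c⟩, ⟨b, d⟩⟩
  -- ratio bounds along the trajectory
  have hq1 : ∀ t ∈ Set.Icc (0 : ℝ) T,
      lam - ε₁ ≤ (X (γ t)).1 / (γ t).1 ∧ (X (γ t)).1 / (γ t).1 ≤ lam + ε₁ := by
    intro t ht
    obtain ⟨a, b, c, d⟩ := hmem t ht
    have h := abs_le.mp (key1 (γ t) (hmemS t ht))
    constructor
    · rw [le_div_iff₀ a]; nlinarith [h.1]
    · rw [div_le_iff₀ a]; nlinarith [h.2]
  have hq2 : ∀ t ∈ Set.Icc (0 : ℝ) T,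
      ν - ε₁ ≤ (X (γ t)).2 / (γ t).2 ∧ (X (γ t)).2 / (γ t).2 ≤ ν + ε₁ := by
    intro t ht
    obtain ⟨a, b, c, d⟩ := hmem t ht
    have h := abs_le.mp (key2 (γ t) (hmemS t ht))
    constructor
    · rw [le_div_iff₀ c]; nlinarith [h.1]
    · rw [div_le_iff₀ c]; nlinarith [h.2]
  -- log derivatives
  have hlog1 : ∀ t ∈ Set.Icc (0 : ℝ) T,
      HasDerivWithinAt (fun u => Real.log (γ u).1) ((X (γ t)).1 / (γ t).1) (Set.Icc 0 T) t := by
    intro t ht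
    exact (hderiv_fst (hγ t ht)).log (ne_of_gt (hmem t ht).1)
  have hlog2 : ∀ t ∈ Set.Icc (0 : ℝ) T,
      HasDerivWithinAt (fun u => Real.log (γ u).2) ((X (γ t)).2 / (γ t).2) (Set.Icc 0 T) t := by
    intro t ht
    exact (hderiv_snd (hγ t ht)).log (ne_of_gt (hmem t ht).2.2.1)
  -- generic monotonicity function
  have hmain : ∀ c : ℝ, 0 < c →
      ∀ t ∈ Set.Icc (0 : ℝ) T, HasDerivWithinAt
        (fun u => |ν| * Real.log (γ u).1 + c * Real.log (γ u).2)
        (|ν| * ((X (γ t)).1 / (γ t).1) + c * ((X (γ t)).2 / (γ t).2)) (Set.Icc 0 T) t := by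
    intro c hc t ht
    exact ((hlog1 t ht).const_mul _).add ((hlog2 t ht).const_mul _)
  have hintIcc : interior (Set.Icc (0 : ℝ) T) = Set.Ioo 0 T := interior_Icc
  -- strict monotonicity of F (lower bound)
  have hlamε : 0 < lam - ε := by linarith
  have hlamε' : 0 < lam + ε := by linarith
  have hF : StrictMonoOn (fun u => |ν| * Real.log (γ u).1 + (lam - ε) * Real.log (γ u).2)
      (Set.Icc 0 T) := by
    apply strictMonoOn_of_deriv_pos (convex_Icc _ _)
    · intro t ht
      exact (hmain (lam - ε) hlamε t ht).continuousWithinAt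
    · intro t ht
      rw [hintIcc] at ht
      have ht' : t ∈ Set.Icc (0 : ℝ) T := Set.Ioo_subset_Icc_self ht
      have hd := (hmain (lam - ε) hlamε t ht').hasDerivAt
        (Icc_mem_nhds ht.1 ht.2)
      rw [hd.deriv]
      have h1 := (hq1 t ht').1
      have h2 := (hq2 t ht').1
      have e1 : |ν| * (lam - ε₁) ≤ |ν| * ((X (γ t)).1 / (γ t).1) :=
        mul_le_mul_of_nonneg_left h1 (le_of_lt hνpos)
      have e2 : (lam - ε) * (ν - ε₁) ≤ (lam - ε) * ((X (γ t)).2 / (γ t).2) :=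
        mul_le_mul_of_nonneg_left h2 (le_of_lt hlamε)
      nlinarith [hε₁eq, hε₁pos]
  have hG : StrictAntiOn (fun u => |ν| * Real.log (γ u).1 + (lam + ε) * Real.log (γ u).2)
      (Set.Icc 0 T) := by
    apply strictAntiOn_of_deriv_neg (convex_Icc _ _)
    · intro t ht
      exact (hmain (lam + ε) hlamε' t ht).continuousWithinAt
    · intro t ht
      rw [hintIcc] at ht
      have ht' : t ∈ Set.Icc (0 : ℝ) T := Set.Ioo_subset_Icc_self ht
      have hd := (hmain (lam + ε) hlamε' t ht').hasDerivAt
        (Icc_mem_nhds ht.1 ht.2)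
      rw [hd.deriv]
      have h1 := (hq1 t ht').2
      have h2 := (hq2 t ht').2
      have e1 : |ν| * ((X (γ t)).1 / (γ t).1) ≤ |ν| * (lam + ε₁) :=
        mul_le_mul_of_nonneg_left h1 (le_of_lt hνpos)
      have e2 : (lam + ε) * ((X (γ t)).2 / (γ t).2) ≤ (lam + ε) * (ν + ε₁) :=
        mul_le_mul_of_nonneg_left h2 (le_of_lt hlamε')
      nlinarith [hε₁eq, hε₁pos]
  have h0T : (0 : ℝ) ∈ Set.Icc (0 : ℝ) T := ⟨le_refl _, le_of_lt hT⟩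
  have hTT : T ∈ Set.Icc (0 : ℝ) T := ⟨le_of_lt hT, le_refl _⟩
  have hFlt := hF h0T hTT hT
  have hGlt := hG h0T hTT hT
  simp only [hγ0, hγT] at hFlt hGlt
  -- translate log inequalities into rpow inequalities
  constructor
  · -- lower bound
    set a : ℝ := |ν| / (lam - ε) with hadef
    have haeq : a * (lam - ε) = |ν| := div_mul_cancel₀ _ (ne_of_gt hlamε)
    have hgoal : (1 - a) * Real.log δ + a * Real.log x < Real.log y := by
      have h := hFlt
      -- |ν| log x + (lam-ε) log δ < |ν| log δ + (lam-ε) log y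
      have hexp : (lam - ε) * ((1 - a) * Real.log δ + a * Real.log x)
          = (lam - ε) * Real.log δ - (a * (lam - ε)) * Real.log δ
            + (a * (lam - ε)) * Real.log x := by ring
      have h2 : (lam - ε) * ((1 - a) * Real.log δ + a * Real.log x)
          < (lam - ε) * Real.log y := by rw [hexp, haeq]; linarith
      exact lt_of_mul_lt_mul_left h2 (le_of_lt hlamε)
    calc δ ^ (1 - a) * x ^ a
        = Real.exp ((1 - a) * Real.log δ + a * Real.log x) := by
          rw [Real.rpow_def_of_pos hδpos, Real.rpow_def_of_pos hx, ← Real.exp_add]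
          congr 1; ring
      _ < Real.exp (Real.log y) := Real.exp_lt_exp.mpr hgoal
      _ = y := Real.exp_log hy
  · -- upper bound
    set b : ℝ := |ν| / (lam + ε) with hbdef
    have hbeq : b * (lam + ε) = |ν| := div_mul_cancel₀ _ (ne_of_gt hlamε')
    have hgoal : Real.log y < (1 - b) * Real.log δ + b * Real.log x := by
      have h := hGlt
      have hexp : (lam + ε) * ((1 - b) * Real.log δ + b * Real.log x)
          = (lam + ε) * Real.log δ - (b * (lam + ε)) * Real.log δ
            + (b * (lam + ε)) * Real.log x := by ring
      have h2 : (lam + ε) * Real.log y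
          < (lam + ε) * ((1 - b) * Real.log δ + b * Real.log x) := by rw [hexp, hbeq]; linarith
      exact lt_of_mul_lt_mul_left h2 (le_of_lt hlamε')
    calc y = Real.exp (Real.log y) := (Real.exp_log hy).symm
      _ < Real.exp ((1 - b) * Real.log δ + b * Real.log x) := Real.exp_lt_exp.mpr hgoal
      _ = δ ^ (1 - b) * x ^ b := by
          rw [Real.rpow_def_of_pos hδpos, Real.rpow_def_of_pos hx, ← Real.exp_add]
          congr 1; ring
end
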